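/- arXiv:0801.2597 — 5 statements merged into one kernel-verified Lean document; each statement's English description precedes it below -/
import Mathlib

section
/- The number of juggling sequences of period n with fewer than b balls equals b^n. -/
/-!
If `T` is a juggling sequence, `σ i = i + 1 + T i mod n` is a permutation, and
`T i = m_σ(i) + n * q i` where `m_σ(i) < n` is the least throw from beat `i + 1` landing at `σ i`
and `q` is an arbitrary vector of naturals. Since `∑ i, m_σ(i) = n * (A(σ) - 1)`, where `A(σ)`
counts the weak anti-excedances `σ i ≤ i`, the bound `∑ i, T i < n * b` becomes
`A(σ) + ∑ i, q i ≤ b`, which has `(n + b - A(σ)).choose n` solutions `q` by stars and bars.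
Summing over `σ` gives `b ^ n` by Worpitzky's identity, since weak anti-excedances are
Eulerian-distributed; it is proved by induction on `n`, splitting off the image of `0`.
-/

open Finset Equiv

namespace Juggling

section WeakAntiexcedances

variable {n : ℕ}

def weakAntiexcedances (σ : Perm (Fin n)) : ℕ := #{i | σ i ≤ i}

lemma weakAntiexcedances_eq_sum (σ : Perm (Fin n)) :
    weakAntiexcedances σ = ∑ i, if σ i ≤ i then 1 else 0 :=
  card_filter _ _

lemma weakAntiexcedances_le (σ : Perm (Fin n)) : weakAntiexcedances σ ≤ n :=
  (card_filter_le _ _).trans_eq (card_fin n)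

lemma weakAntiexcedances_decomposeFin_symm_zero (e : Perm (Fin n)) :
    weakAntiexcedances (Perm.decomposeFin.symm (0, e)) = weakAntiexcedances e + 1 := by
  rw [weakAntiexcedances_eq_sum, weakAntiexcedances_eq_sum, Fin.sum_univ_succ]
  simp [Fin.succ_le_succ_iff, add_comm]

lemma weakAntiexcedances_decomposeFin_symm_succ (e : Perm (Fin n)) (j : Fin n) :
    weakAntiexcedances (Perm.decomposeFin.symm (j.succ, e)) =
      if j ≤ e.symm j then weakAntiexcedances e else weakAntiexcedances e + 1 := by
  set f : Fin n → ℕ := fun x => if e x ≤ x then 1 else 0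
  -- the preimage of `j` under `e` is sent to `0`, a weak anti-excedance
  have hsucc : ∀ x, (if Perm.decomposeFin.symm (j.succ, e) x.succ ≤ x.succ then 1 else 0) =
      Function.update f (e.symm j) 1 x := by
    intro x
    rw [Perm.decomposeFin_symm_apply_succ, Function.update_apply]
    by_cases hx : x = e.symm j
    · simp [hx]
    · have hej : e x ≠ j := fun h => hx (e.eq_symm_apply.mpr h)
      rw [swap_apply_of_ne_of_ne (Fin.succ_ne_zero _) (by simpa using hej)]
      simp [f, hx, Fin.succ_le_succ_iff]
  have hf : ∑ x, f x = f (e.symm j) + ∑ x ∈ univ \ {e.symm j}, f x := by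
    rw [← sum_update_of_mem (mem_univ _), Function.update_eq_self]
  rw [weakAntiexcedances_eq_sum, Fin.sum_univ_succ, Perm.decomposeFin_symm_apply_zero,
    sum_congr rfl fun x _ => hsucc x, sum_update_of_mem (mem_univ _), weakAntiexcedances_eq_sum,
    show (∑ x, if e x ≤ x then 1 else 0) = ∑ x, f x from rfl, hf]
  simp only [nonpos_iff_eq_zero, Fin.succ_ne_zero, ↓reduceIte, zero_add, apply_symm_apply, f]
  split_ifs <;> omega

end WeakAntiexcedances

theorem mul_choose_add_mul_choose_eq {n a b : ℕ} (ha : a ≤ n) :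
    a * (n + 1 + b - a).choose (n + 1) + (n + 1 - a) * (n + b - a).choose (n + 1) =
      b * (n + b - a).choose n := by
  obtain ⟨d, rfl⟩ := Nat.exists_eq_add_of_le ha
  rcases le_or_gt a b with hab | hba
  · obtain ⟨c, rfl⟩ := Nat.exists_eq_add_of_le hab
    have key := Nat.choose_succ_right_eq (a + d + c) (a + d)
    rw [show a + d + c - (a + d) = c by omega] at key
    rw [show a + d + (a + c) - a = a + d + c by omega,
      show a + d + 1 + (a + c) - a = a + d + c + 1 by omega, show a + d + 1 - a = d + 1 by omega,
      Nat.choose_succ_succ']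
    linear_combination key
  · have h₁ : (a + d + b - a).choose (a + d) = 0 := Nat.choose_eq_zero_of_lt (by omega)
    have h₂ : (a + d + 1 + b - a).choose (a + d + 1) = 0 := Nat.choose_eq_zero_of_lt (by omega)
    have h₃ : (a + d + b - a).choose (a + d + 1) = 0 := Nat.choose_eq_zero_of_lt (by omega)
    simp [h₁, h₂, h₃]

lemma sum_choose_weakAntiexcedances_decomposeFin_symm {n : ℕ} (b : ℕ) (e : Perm (Fin n)) :
    ∑ p, (n + 1 + b - weakAntiexcedances (Perm.decomposeFin.symm (p, e))).choose (n + 1) =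
      b * (n + b - weakAntiexcedances e).choose n := by
  set a := weakAntiexcedances e
  have ha : a ≤ n := weakAntiexcedances_le e
  have hcard : #{x | ¬e x ≤ x} = n - a := by
    have := card_filter_add_card_filter_not (s := univ) (fun x => e x ≤ x)
    rw [card_univ, Fintype.card_fin] at this
    change a + _ = n at this
    omega
  have hterm : ∀ x,
      (n + 1 + b - weakAntiexcedances (Perm.decomposeFin.symm ((e x).succ, e))).choose (n + 1) =
        if e x ≤ x then (n + 1 + b - a).choose (n + 1) else (n + b - a).choose (n + 1) := by
    intro x
    rw [weakAntiexcedances_decomposeFin_symm_succ, symm_apply_apply]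
    split_ifs
    · rfl
    · congr 1; omega
  rw [Fin.sum_univ_succ, weakAntiexcedances_decomposeFin_symm_zero, ← Equiv.sum_comp e]
  simp only [hterm, sum_ite, sum_const, smul_eq_mul, hcard]
  rw [show #{x | e x ≤ x} = a from rfl, ← mul_choose_add_mul_choose_eq ha,
    show n + 1 + b - (a + 1) = n + b - a by omega, show n + 1 - a = n - a + 1 by omega]
  ring

theorem sum_choose_weakAntiexcedances (n b : ℕ) :
    ∑ σ : Perm (Fin n), (n + b - weakAntiexcedances σ).choose n = b ^ n := by
  induction n with
  | zero => simp
  | succ n ih =>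
    rw [← Perm.decomposeFin.symm.sum_comp, Fintype.sum_prod_type, sum_comm]
    simp only [sum_choose_weakAntiexcedances_decomposeFin_symm, ← mul_sum, ih, pow_succ, mul_comm]

section StarsAndBars

variable {ι : Type*} [Fintype ι]

/-- The slack `m - ∑ i, q i` becomes an extra coordinate, indexed by `none`. -/
def sumLeEquiv (m : ℕ) :
    {q : ι → ℕ // ∑ i, q i ≤ m} ≃ {P : Option ι → ℕ // ∑ o, P o = m} where
  toFun q := ⟨fun o => o.elim (m - ∑ i, q.1 i) q.1, by
    rw [Fintype.sum_option]
    have := q.2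
    simp only [Option.elim]
    omega⟩
  invFun P := ⟨fun i => P.1 (some i), by
    have := P.2
    rw [Fintype.sum_option] at this
    show ∑ i, P.1 (some i) ≤ m
    omega⟩
  left_inv q := rfl
  right_inv P := by
    ext (_ | i)
    · have := P.2
      rw [Fintype.sum_option] at this
      show m - ∑ i, P.1 (some i) = P.1 none
      omega
    · rfl

theorem card_sum_le (m : ℕ) :
    Nat.card {q : ι → ℕ // ∑ i, q i ≤ m} = (Fintype.card ι + m).choose m := by
  classical
  rw [Nat.card_congr ((sumLeEquiv m).trans (Sym.equivNatSumOfFintype (Option ι) m).symm),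
    Nat.card_eq_fintype_card, Sym.card_sym_eq_choose, Fintype.card_option, Nat.add_right_comm,
    Nat.add_sub_cancel]

instance finite_add_sum_le (a m : ℕ) : Finite {q : ι → ℕ // a + ∑ i, q i ≤ m} := by
  refine Finite.of_injective (β := ι → Fin (m + 1)) (fun q i => ⟨q.1 i, ?_⟩)
    fun _ _ h => Subtype.ext (funext fun i => Fin.ext_iff.mp (congrFun h i))
  have := single_le_sum (fun j _ => (q.1 j).zero_le) (mem_univ i)
  have := q.2
  omega

theorem card_add_sum_le [Nonempty ι] (a m : ℕ) :
    Nat.card {q : ι → ℕ // a + ∑ i, q i ≤ m} =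
      (Fintype.card ι + m - a).choose (Fintype.card ι) := by
  rcases le_or_gt a m with ham | hma
  · rw [Nat.card_congr (Equiv.subtypeEquivRight (q := fun q => ∑ i, q i ≤ m - a)
      fun q => by omega), card_sum_le (m - a),
      Nat.add_sub_assoc ham, Nat.choose_symm_add]
  · have : IsEmpty {q : ι → ℕ // a + ∑ i, q i ≤ m} := ⟨fun ⟨q, hq⟩ => by omega⟩
    have := Fintype.card_pos (α := ι)
    rw [Nat.card_of_isEmpty, Nat.choose_eq_zero_of_lt (by omega)]

end StarsAndBars

section Bijection

variable {n : ℕ}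

/-- The residue mod `n` of the beat at which the ball thrown at beat `i + 1` lands. -/
def landing (T : Fin n → ℕ) (i : Fin n) : Fin n := ⟨(i + 1 + T i) % n, Nat.mod_lt _ i.pos⟩

lemma injective_natCast_iff_injective_landing [NeZero n] (T : Fin n → ℕ) :
    Function.Injective (fun i : Fin n => ((i + 1 + T i : ℕ) : ZMod n)) ↔
      Function.Injective (landing T) := by
  rw [← (ZMod.val_injective n).of_comp_iff, ← Fin.val_injective.of_comp_iff]
  congr! 1
  ext i
  simp only [Function.comp_apply, ZMod.val_natCast, landing]

/-- The least throw from beat `i + 1` that lands at beat `σ i` modulo `n`. -/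
def minThrow (σ : Perm (Fin n)) (i : Fin n) : ℕ := σ i + (if σ i ≤ i then n else 0) - (i + 1)

lemma add_minThrow (σ : Perm (Fin n)) (i : Fin n) :
    i + 1 + minThrow σ i = σ i + if σ i ≤ i then n else 0 := by
  have := (σ i).isLt
  have := i.isLt
  simp only [minThrow, Fin.le_iff_val_le_val]
  split_ifs <;> omega

lemma minThrow_lt (σ : Perm (Fin n)) (i : Fin n) : minThrow σ i < n := by
  have := (σ i).isLt
  have := add_minThrow σ i
  split_ifs at this <;> omega

lemma add_minThrow_mod (σ : Perm (Fin n)) (i : Fin n) : (i + 1 + minThrow σ i) % n = σ i := by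
  rw [add_minThrow]
  split_ifs
  · rw [Nat.add_mod_right, Nat.mod_eq_of_lt (σ i).isLt]
  · rw [add_zero, Nat.mod_eq_of_lt (σ i).isLt]

lemma eq_minThrow_of_add_mod {σ : Perm (Fin n)} {i : Fin n} {r : ℕ} (hr : r < n)
    (h : (i + 1 + r) % n = σ i) : r = minThrow σ i := by
  refine Nat.ModEq.eq_of_lt_of_lt (Nat.ModEq.add_left_cancel' (i + 1) ?_) hr (minThrow_lt σ i)
  rw [Nat.ModEq, h, add_minThrow_mod]

lemma sum_minThrow_add (σ : Perm (Fin n)) :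
    ∑ i, minThrow σ i + n = n * weakAntiexcedances σ := by
  have h := sum_congr rfl fun i (_ : i ∈ univ) => add_minThrow σ i
  simp only [sum_add_distrib, Equiv.sum_comp σ (fun i => (i : ℕ)), sum_ite, sum_const_zero,
    sum_const, card_univ, Fintype.card_fin, smul_eq_mul] at h
  rw [weakAntiexcedances]
  linarith

def ofPerm (σ : Perm (Fin n)) (q : Fin n → ℕ) (i : Fin n) : ℕ := minThrow σ i + n * q i

lemma landing_ofPerm (σ : Perm (Fin n)) (q : Fin n → ℕ) : landing (ofPerm σ q) = σ := by
  ext i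
  simp [landing, ofPerm, ← add_assoc, add_minThrow_mod]

lemma ofPerm_div (σ : Perm (Fin n)) (q : Fin n → ℕ) (i : Fin n) : ofPerm σ q i / n = q i := by
  rw [ofPerm, Nat.add_mul_div_left _ _ i.pos, Nat.div_eq_of_lt (minThrow_lt σ i), zero_add]

lemma sum_ofPerm_lt_iff [NeZero n] (σ : Perm (Fin n)) (q : Fin n → ℕ) (b : ℕ) :
    ∑ i, ofPerm σ q i < n * b ↔ weakAntiexcedances σ + ∑ i, q i ≤ b := by
  have h : ∑ i, ofPerm σ q i + n = n * (weakAntiexcedances σ + ∑ i, q i) := by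
    simp only [ofPerm, sum_add_distrib, ← mul_sum]
    linarith [sum_minThrow_add σ]
  calc ∑ i, ofPerm σ q i < n * b ↔ ∑ i, ofPerm σ q i + n < n * (b + 1) := by
        rw [mul_add_one]; omega
    _ ↔ weakAntiexcedances σ + ∑ i, q i < b + 1 := by
        rw [h, Nat.mul_lt_mul_left (Nat.pos_of_neZero n)]
    _ ↔ _ := Nat.lt_succ_iff

noncomputable def jugglingEquiv :
    {T : Fin n → ℕ // Function.Injective (landing T)} ≃ Perm (Fin n) × (Fin n → ℕ) where
  toFun T := (Equiv.ofBijective (landing T) (Finite.injective_iff_bijective.mp T.2), (T.1 · / n))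
  invFun p := ⟨ofPerm p.1 p.2, by rw [landing_ofPerm]; exact p.1.injective⟩
  left_inv T := by
    set σ := Equiv.ofBijective (landing T.1) (Finite.injective_iff_bijective.mp T.2)
    refine Subtype.ext (funext fun i => ?_)
    have hT : T.1 i % n = minThrow σ i :=
      eq_minThrow_of_add_mod (Nat.mod_lt _ i.pos) (by simp [σ, landing])
    show minThrow σ i + n * (T.1 i / n) = T.1 i
    rw [← hT, Nat.mod_add_div]
  right_inv p :=
    Prod.ext (Equiv.ext (congrFun (landing_ofPerm p.1 p.2))) (funext (ofPerm_div p.1 p.2))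

end Bijection

theorem card_juggling_eq_sum_choose {n : ℕ} [NeZero n] (b : ℕ) :
    Nat.card {T : Fin n → ℕ // Function.Injective (landing T) ∧ ∑ i, T i < n * b} =
      ∑ σ : Perm (Fin n), (n + b - weakAntiexcedances σ).choose n := by
  let e : {T : Fin n → ℕ // Function.Injective (landing T) ∧ ∑ i, T i < n * b} ≃
      Σ σ : Perm (Fin n), {q : Fin n → ℕ // weakAntiexcedances σ + ∑ i, q i ≤ b} :=
    (Equiv.subtypeSubtypeEquivSubtypeInter _ _).symm.trans <|
      (Equiv.subtypeEquiv jugglingEquiv.symm fun p => (sum_ofPerm_lt_iff p.1 p.2 b).symm).symm.trans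
        (Equiv.subtypeProdEquivSigmaSubtype fun σ (q : Fin n → ℕ) =>
          weakAntiexcedances σ + ∑ i, q i ≤ b)
  simp only [Nat.card_congr e, Nat.card_sigma, card_add_sum_le, Fintype.card_fin]

end Juggling

/-- The number of juggling sequences of period `n` (sequences `T` of nonnegative
integers such that `i + t_i (mod n)` are all distinct) with fewer than `b` balls
(i.e. `(1/n) * ∑ t_i < b`, equivalently `∑ t_i < n * b`) equals `b ^ n`. -/
theorem number_of_juggling_sequences (n b : ℕ) (hn : 0 < n) :
    {T : Fin n → ℕ |
        Function.Injective (fun i : Fin n => (((i : ℕ) + 1 + T i : ℕ) : ZMod n)) ∧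
        ∑ i, T i < n * b}.ncard = b ^ n := by
  have : NeZero n := ⟨hn.ne'⟩
  simp_rw [Juggling.injective_natCast_iff_injective_landing]
  rw [← Nat.card_coe_set_eq]
  exact (Juggling.card_juggling_eq_sum_choose b).trans (Juggling.sum_choose_weakAntiexcedances n b)
end

section
/- For a valid juggling sequence T = (t_1,...,t_n) (i.e., i ↦ i + t_i mod n is a bijection on Z/nZ), the sum ∑_{i=1}^n t_i is divisible by n. -/
/-- For a valid juggling sequence `T = (t_1,...,t_n)`, i.e. one where
`i ↦ i + t_i (mod n)` is injective on the `n` indices, the sum `∑ t_i`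
is divisible by `n` (the quotient being the number of balls). -/
theorem juggling_sum_divisible (n : ℕ) (T : Fin n → ℕ)
    (hT : Function.Injective (fun i : Fin n => (((i : ℕ) + 1 + T i : ℕ) : ZMod n))) :
    n ∣ ∑ i, T i := by
  rcases Nat.eq_zero_or_pos n with h | h
  · subst h; simp
  haveI : NeZero n := ⟨h.ne'⟩
  have hcard : Fintype.card (Fin n) = Fintype.card (ZMod n) := by simp [ZMod.card]
  have hb : Function.Bijective (fun i : Fin n => (((i : ℕ) + 1 + T i : ℕ) : ZMod n)) :=
    (Fintype.bijective_iff_injective_and_card _).mpr ⟨hT, hcard⟩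
  have h1 : Function.Bijective (fun i : Fin n => (((i : ℕ) + 1 : ℕ) : ZMod n)) := by
    refine (Fintype.bijective_iff_injective_and_card _).mpr ⟨?_, hcard⟩
    intro a b hab
    simp only [Nat.cast_add, Nat.cast_one, add_left_inj] at hab
    have : ((a : ℕ) : ZMod n).val = ((b : ℕ) : ZMod n).val := by rw [hab]
    rw [ZMod.val_cast_of_lt a.isLt, ZMod.val_cast_of_lt b.isLt] at this
    exact Fin.ext this
  have e1 : ∑ i : Fin n, (((i : ℕ) + 1 + T i : ℕ) : ZMod n) = ∑ x : ZMod n, x :=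
    Fintype.sum_bijective _ hb _ id fun i => rfl
  have e2 : ∑ i : Fin n, (((i : ℕ) + 1 : ℕ) : ZMod n) = ∑ x : ZMod n, x :=
    Fintype.sum_bijective _ h1 _ id fun i => rfl
  have key : ((∑ i, T i : ℕ) : ZMod n) = 0 := by
    push_cast at e1 e2 ⊢
    have : ∑ i : Fin n, (((i : ℕ) : ZMod n) + 1 + (T i : ZMod n))
        = ∑ i : Fin n, ((((i : ℕ) : ZMod n) + 1) + (T i : ZMod n)) := by
      apply Finset.sum_congr rfl; intros; ring
    rw [this, Finset.sum_add_distrib, e2] at e1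
    linear_combination e1
  exact (ZMod.natCast_eq_zero_iff _ _).mp key
end

section
/- In the multiplex state diagram with parameters b and m, if there is a directed walk of length n from state α = ⟨a_1, a_2, ...⟩ to state β = ⟨b_1, b_2, ...⟩, then b_i ≥ a_{n+i} for all i ≥ 1. -/
theorem apply_add_le_of_shift_le {α : Type*} [Preorder α] {f : ℕ → ℕ → α} :
    ∀ {n : ℕ}, (∀ k < n, ∀ i, f k (i + 1) ≤ f (k + 1) i) → ∀ i, f 0 (n + i) ≤ f n i
  | 0, _, i => by rw [Nat.zero_add]
  | n + 1, h, i =>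
    calc f 0 (n + 1 + i) = f 0 (n + (i + 1)) := by rw [Nat.add_right_comm, Nat.add_assoc]
      _ ≤ f n (i + 1) :=
        apply_add_le_of_shift_le (fun k hk => h k (Nat.lt_succ_of_lt hk)) (i + 1)
      _ ≤ f (n + 1) i := h n (Nat.lt_succ_self n) i

theorem state_diagram_walk_landing_general (n : ℕ) (f : ℕ → (ℕ →₀ ℕ))
    (hedge : ∀ k < n, ∀ i, f k (i + 1) ≤ f (k + 1) i) :
    ∀ i, f 0 (n + i) ≤ f n i :=
  apply_add_le_of_shift_le (f := fun k => ⇑(f k)) hedge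

/-- In the multiplex state diagram with parameters `b` and `m` (states are
finitely supported sequences with entries in `{0,...,m}` summing to `b`, indexed
here from `0`, with an edge `α → β` iff `α (i+1) ≤ β i` for all `i`), if there is
a directed walk of length `n` from `α = f 0` to `β = f n`, then `β i ≥ α (n + i)`
for all `i`. -/
theorem state_diagram_walk_landing (b m n : ℕ) (f : ℕ → (ℕ →₀ ℕ))
    (hstate : ∀ k ≤ n, (∀ i, f k i ≤ m) ∧ (f k).sum (fun _ x => x) = b)
    (hedge : ∀ k < n, ∀ i, f k (i + 1) ≤ f (k + 1) i) :
    ∀ i, f 0 (n + i) ≤ f n i :=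
  state_diagram_walk_landing_general n f hedge
end

section
/- Let γ = (γ_1,...,γ_m) and δ = (δ_1,...,δ_m) encode partitions of b with parts at most m, where γ_i (resp. δ_i) is the number of parts of size i, so ∑ i·γ_i = ∑ i·δ_i = b. Then the transfer coefficient a_{γ,δ} equals ∏_{i=1}^m C((γ_i + ... + γ_m) + 1 − (δ_{i+1} + ... + δ_m), δ_i). -/
/-!
The admissible parts for `S i` are the parts of `γ'` of size at least `i + 1`; these pools
shrink as `i` grows. Choose `S (m - 1)` first, then `S (m - 2)`, and so on. When `S i` is
chosen, its pool of `γ_i + ⋯ + γ_m + 1` parts already contains the `δ_{i+1} + ⋯ + δ_m` parts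
taken by the later sets, so there are `C(γ_i + ⋯ + γ_m + 1 - (δ_{i+1} + ⋯ + δ_m), δ_i)`
choices for it, whatever the later sets were.
-/

open Finset Function

theorem Fin.sum_Ioi_castSucc {M : Type*} [AddCommMonoid M] {n : ℕ} (f : Fin (n + 1) → M)
    (i : Fin n) :
    ∑ j ∈ Ioi i.castSucc, f j = f (Fin.last n) + ∑ j ∈ Ioi i, f j.castSucc := by
  rw [Ioi_eq_Ioc, Fin.top_eq_last, ← Ioo_insert_right (Fin.castSucc_lt_last i),
    sum_insert right_notMem_Ioo, ← Fin.map_castSuccEmb_Ioi, sum_map]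
  rfl

theorem Fin.pairwise_onFun_snoc_iff {β : Type*} {r : β → β → Prop} [Std.Symm r] {n : ℕ}
    {f : Fin n → β} {a : β} :
    Pairwise (r on (Fin.snoc f a : Fin (n + 1) → β)) ↔ Pairwise (r on f) ∧ ∀ i, r (f i) a := by
  simp [Pairwise, Fin.forall_fin_succ', onFun, Fin.castSucc_ne_last,
    (Fin.castSucc_ne_last _).symm, forall_and, comm (r := r) (a := a)]

section DisjointSelections

variable {α : Type*} [DecidableEq α] {n : ℕ}

def disjointSelections (P : Fin n → Finset α) (d : Fin n → ℕ) : Finset (Fin n → Finset α) :=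
  {S ∈ Fintype.piFinset fun i => (P i).powersetCard (d i) | ∀ i j, i ≠ j → Disjoint (S i) (S j)}

theorem mem_disjointSelections {P : Fin n → Finset α} {d : Fin n → ℕ} {S : Fin n → Finset α} :
    S ∈ disjointSelections P d ↔
      (∀ i, S i ⊆ P i ∧ #(S i) = d i) ∧ Pairwise (Disjoint on S) := by
  simp [disjointSelections, mem_powersetCard, Pairwise]

theorem snoc_mem_disjointSelections_iff {P : Fin (n + 1) → Finset α} {d : Fin (n + 1) → ℕ}
    {S : Fin n → Finset α} {T : Finset α}
    (hT : T ∈ (P (Fin.last n)).powersetCard (d (Fin.last n))) :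
    Fin.snoc S T ∈ disjointSelections P d ↔
      S ∈ disjointSelections (fun i => P i.castSucc \ T) (fun i => d i.castSucc) := by
  rw [mem_powersetCard] at hT
  simp only [mem_disjointSelections, Fin.forall_fin_succ', Fin.snoc_castSucc, Fin.snoc_last,
    Fin.pairwise_onFun_snoc_iff, subset_sdiff, hT, and_true, forall_and]
  tauto

theorem card_filter_disjointSelections_last (P : Fin (n + 1) → Finset α) (d : Fin (n + 1) → ℕ)
    {T : Finset α} (hT : T ∈ (P (Fin.last n)).powersetCard (d (Fin.last n))) :
    #{S ∈ disjointSelections P d | S (Fin.last n) = T} =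
      #(disjointSelections (fun i => P i.castSucc \ T) (fun i => d i.castSucc)) := by
  refine card_nbij' Fin.init (Fin.snoc · T) (fun S hS => ?_) (fun S hS => ?_)
    (fun S hS => ?_) (fun S _ => Fin.init_snoc (α := fun _ => Finset α) T S) <;>
    simp only [coe_filter, Set.mem_ofPred_eq, mem_coe] at hS ⊢
  · rw [← snoc_mem_disjointSelections_iff hT, ← hS.2, Fin.snoc_init_self]
    exact hS.1
  · rw [snoc_mem_disjointSelections_iff hT, Fin.snoc_last]
    exact ⟨hS, rfl⟩
  · rw [← hS.2, Fin.snoc_init_self]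

theorem card_disjointSelections {P : Fin n → Finset α} (hP : Antitone P) (d : Fin n → ℕ) :
    #(disjointSelections P d) = ∏ i, (#(P i) - ∑ j ∈ Ioi i, d j).choose (d i) := by
  induction n with
  | zero => simp [disjointSelections]
  | succ n ih =>
    have hfiber : ∀ T ∈ (P (Fin.last n)).powersetCard (d (Fin.last n)),
        #{S ∈ disjointSelections P d | S (Fin.last n) = T} =
          ∏ i : Fin n, (#(P i.castSucc) - d (Fin.last n) - ∑ j ∈ Ioi i, d j.castSucc).choose
            (d i.castSucc) := by
      intro T hT
      obtain ⟨hTP, hTcard⟩ := mem_powersetCard.1 hT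
      have hP' : Antitone fun i : Fin n => P i.castSucc \ T := fun i j hij =>
        sdiff_subset_sdiff (hP (Fin.castSucc_le_castSucc_iff.2 hij)) subset_rfl
      rw [card_filter_disjointSelections_last P d hT, ih hP']
      refine prod_congr rfl fun i _ => ?_
      rw [card_sdiff_of_subset (hTP.trans (hP (Fin.le_last _))), hTcard]
    have hlast : ∀ S ∈ disjointSelections P d,
        S (Fin.last n) ∈ (P (Fin.last n)).powersetCard (d (Fin.last n)) := fun S hS =>
      mem_powersetCard.2 ((mem_disjointSelections.1 hS).1 _)
    rw [card_eq_sum_card_fiberwise hlast, sum_congr rfl hfiber, sum_const, card_powersetCard,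
      smul_eq_mul, Fin.prod_univ_castSucc, mul_comm]
    simp [Fin.sum_Ioi_castSucc, Nat.sub_sub, Ioi_eq_empty.2 fun j _ => Fin.le_last j]

end DisjointSelections

section PartsAtLeast

variable {m : ℕ}

def partsAtLeast (c : Fin m → ℕ) (i : Fin m) : Finset (Fin m × ℕ) :=
  (Ici i).biUnion fun j => {j} ×ˢ range (c j)

theorem mem_partsAtLeast {c : Fin m → ℕ} {i : Fin m} {p : Fin m × ℕ} :
    p ∈ partsAtLeast c i ↔ i ≤ p.1 ∧ p.2 < c p.1 := by
  obtain ⟨j, t⟩ := p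
  simp [partsAtLeast]

theorem antitone_partsAtLeast (c : Fin m → ℕ) : Antitone (partsAtLeast c) :=
  fun _ _ hij _ hp => by
    rw [mem_partsAtLeast] at hp ⊢
    exact ⟨hij.trans hp.1, hp.2⟩

theorem card_partsAtLeast (c : Fin m → ℕ) (i : Fin m) :
    #(partsAtLeast c i) = ∑ j ∈ Ici i, c j := by
  rw [partsAtLeast, card_biUnion]
  · simp
  · intro j _ k _ hjk
    simp [onFun, disjoint_left, Ne.symm hjk]

end PartsAtLeast

theorem Fin.sum_Ici_ite_val_eq_sub_one {m : ℕ} (i : Fin m) :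
    ∑ j ∈ Ici i, (if (j : ℕ) = m - 1 then 1 else 0) = 1 := by
  have hi := i.isLt
  have hlast : ∀ j : Fin m, (j : ℕ) = m - 1 ↔ j = ⟨m - 1, by omega⟩ :=
    fun j => by rw [Fin.ext_iff]
  simp only [hlast, sum_ite_eq', mem_Ici, Fin.le_def]
  exact if_pos (by omega)

theorem transfer_coefficient_formula_general (m : ℕ) (γ δ : Fin m → ℕ) :
    {S : Fin m → Finset (Fin m × ℕ) |
        (∀ i, (S i).card = δ i) ∧
        (∀ i, ∀ p ∈ S i, p.2 < (γ p.1 + if (p.1 : ℕ) = m - 1 then 1 else 0) ∧ i ≤ p.1) ∧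
        (∀ i j, i ≠ j → Disjoint (S i) (S j))}.ncard =
      ∏ i : Fin m,
        Nat.choose ((∑ j ∈ Finset.Ici i, γ j) + 1 - ∑ j ∈ Finset.Ioi i, δ j) (δ i) := by
  set γ' : Fin m → ℕ := fun j => γ j + if (j : ℕ) = m - 1 then 1 else 0
  have hset : {S : Fin m → Finset (Fin m × ℕ) |
        (∀ i, (S i).card = δ i) ∧
        (∀ i, ∀ p ∈ S i, p.2 < γ' p.1 ∧ i ≤ p.1) ∧
        (∀ i j, i ≠ j → Disjoint (S i) (S j))} = disjointSelections (partsAtLeast γ') δ := by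
    ext S
    simp only [Set.mem_ofPred_eq, mem_coe, mem_disjointSelections, subset_iff, mem_partsAtLeast]
    constructor
    · rintro ⟨hcard, hparts, hdisj⟩
      exact ⟨fun i => ⟨fun p hp => (hparts i p hp).symm, hcard i⟩, hdisj⟩
    · rintro ⟨hsel, hdisj⟩
      exact ⟨fun i => (hsel i).2, fun i p hp => ((hsel i).1 hp).symm, hdisj⟩
  rw [hset, Set.ncard_coe_finset, card_disjointSelections (antitone_partsAtLeast γ')]
  refine prod_congr rfl fun i _ => ?_
  rw [card_partsAtLeast, sum_add_distrib, Fin.sum_Ici_ite_val_eq_sub_one]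

/-- Let `γ, δ : Fin m → ℕ` encode partitions of `b` with parts at most `m`,
where `γ i` (resp. `δ i`) is the number of parts of size `i + 1`. Let
`γ' = γ` with one extra part of size `m` added.  The transfer coefficient
`a_{γ,δ}` counts the insertions of `δ` into `γ'`: families `S : Fin m → Finset (Fin m × ℕ)`
where `S i` is a set of `δ i` parts of `γ'` (a part of size `j+1` being a pair
`(j, t)` with `t < γ' j`) each of size at least `i + 1`, the sets being pairwise
disjoint.  This count equals
`∏_{i} C((γ_i + ⋯ + γ_m) + 1 − (δ_{i+1} + ⋯ + δ_m), δ_i)`. -/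
theorem transfer_coefficient_formula (m b : ℕ) (hm : 0 < m) (γ δ : Fin m → ℕ)
    (hγ : ∑ i : Fin m, ((i : ℕ) + 1) * γ i = b)
    (hδ : ∑ i : Fin m, ((i : ℕ) + 1) * δ i = b) :
    {S : Fin m → Finset (Fin m × ℕ) |
        (∀ i, (S i).card = δ i) ∧
        (∀ i, ∀ p ∈ S i, p.2 < (γ p.1 + if (p.1 : ℕ) = m - 1 then 1 else 0) ∧ i ≤ p.1) ∧
        (∀ i j, i ≠ j → Disjoint (S i) (S j))}.ncard =
      ∏ i : Fin m,
        Nat.choose ((∑ j ∈ Finset.Ici i, γ j) + 1 - ∑ j ∈ Finset.Ioi i, δ j) (δ i) :=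
  transfer_coefficient_formula_general m γ δ
end

section
/- The sequence a(n) counting closed walks of length n based at state ⟨3⟩ in the multiplex state diagram with b = 3 balls and capacity m = 3 satisfies a(k+3) = 10·a(k+2) − 27·a(k+1) + 20·a(k) for all k ≥ 1, with initial values a(1) = 1, a(2) = 4, a(3) = 20. -/
/-!
Walks are counted by removing their last step. A state `s` precedes `t` iff
`s = single 0 (3 - |u|) + (u shifted by one)` for some `u ≤ t`, so the predecessors of `t`
correspond to `Iic t`. Every state is `single x 3`, `single x 2 + single y 1` or
`single x 1 + single y 1 + single z 1`, of support size `1`, `2`, `3`, and summing over `u ≤ t`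
in each case shows that the number of predecessors of `t` of a given support size depends only
on the support size of `t`. As every state is a successor of `⟨3⟩`, the number of walks of length
`n + 1` from `⟨3⟩` to `t` is then the `#t.support` entry of `Mⁿ 𝟙` for a `3 × 3` matrix `M` with
characteristic polynomial `X³ - 10X² + 27X - 20`, and Cayley–Hamilton gives the recurrence.
-/

open Finset Finsupp

namespace Multiplex

section Walks

variable {α : Type*} (r : α → α → Prop)

def walkSet (n : ℕ) (u v : α) : Set (Fin (n + 1) → α) :=
  {f | f 0 = u ∧ f (Fin.last n) = v ∧ ∀ k : Fin n, r (f k.castSucc) (f k.succ)}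

lemma walkSet_succ (n : ℕ) (u v : α) :
    walkSet r (n + 1) u v = ⋃ w ∈ {w | r w v}, (Fin.snoc · v) '' walkSet r n u w := by
  ext f
  simp only [walkSet, Set.mem_iUnion, Set.mem_image, Set.mem_ofPred_eq, exists_prop]
  constructor
  · rintro ⟨h0, hlast, hstep⟩
    refine ⟨f (Fin.last n).castSucc, ?_, Fin.init f, ⟨h0, rfl, fun k => hstep k.castSucc⟩, ?_⟩
    · simpa [hlast] using hstep (Fin.last n)
    · rw [← hlast, Fin.snoc_init_self]
  · rintro ⟨w, hw, g, ⟨h0, hlast, hstep⟩, rfl⟩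
    refine ⟨by simpa using h0, Fin.snoc_last _ _, Fin.lastCases ?_ fun k => ?_⟩
    · simpa [hlast] using hw
    · rw [Fin.succ_castSucc, Fin.snoc_castSucc, Fin.snoc_castSucc]
      exact hstep k

variable {r}

lemma walkSet_finite (hr : ∀ v, {w | r w v}.Finite) (n : ℕ) (u v : α) :
    (walkSet r n u v).Finite := by
  induction n generalizing v with
  | zero =>
    refine Set.Subsingleton.finite fun f hf g hg => funext fun k => ?_
    rw [Fin.fin_one_eq_zero k, hf.1, hg.1]
  | succ n ih =>
    rw [walkSet_succ]
    exact (hr v).biUnion fun w _ => (ih w).image _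

lemma ncard_walkSet_succ (hr : ∀ v, {w | r w v}.Finite) (n : ℕ) (u : α) {v : α}
    {P : Finset α} (hP : ∀ w, w ∈ P ↔ r w v) :
    (walkSet r (n + 1) u v).ncard = ∑ w ∈ P, (walkSet r n u w).ncard := by
  have hP' : {w | r w v} = ↑P := by ext w; simp [hP]
  rw [walkSet_succ, hP', Set.Finite.ncard_biUnion P.finite_toSet
    (fun w _ => (walkSet_finite hr n u w).image _), finsum_mem_coe_finset]
  · refine Finset.sum_congr rfl fun w _ => Set.ncard_image_of_injective _ ?_
    intro f g h
    simpa using congrArg Fin.init h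
  · intro w _ w' _ hne
    refine Set.disjoint_left.2 ?_
    rintro _ ⟨f, ⟨-, hf, -⟩, rfl⟩ ⟨g, ⟨-, hg, -⟩, hgf⟩
    have := congrFun hgf (Fin.last n).castSucc
    simp only [Fin.snoc_castSucc, hf, hg] at this
    exact hne this.symm

lemma ncard_walkSet_zero [DecidableEq α] (u v : α) :
    (walkSet r 0 u v).ncard = if u = v then 1 else 0 := by
  split_ifs with h
  · refine Set.ncard_eq_one.2
      ⟨fun _ => u, Set.eq_singleton_iff_unique_mem.2 ⟨⟨rfl, h, Fin.elim0⟩, ?_⟩⟩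
    rintro f ⟨h0, -, -⟩
    exact funext fun k => by rw [Fin.fin_one_eq_zero k, h0]
  · have : walkSet r 0 u v = ∅ :=
      Set.eq_empty_of_forall_notMem fun f hf => h (hf.1.symm.trans hf.2.1)
    rw [this, Set.ncard_empty]

end Walks

lemma card_support_single_add {ι : Type*} [DecidableEq ι] {x : ι} {r : ι →₀ ℕ}
    (hx : x ∉ r.support) (c : ℕ) :
    #(single x c + r).support = #r.support + if c = 0 then 0 else 1 := by
  rcases eq_or_ne c 0 with rfl | hc
  · simp
  · rw [support_single_add hx hc, card_cons, if_neg hc]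

section IicSum

variable {ι M : Type*} [DecidableEq ι] [AddCommMonoid M] (φ : ℕ → ℕ → M)

/-- The offsets `a`, `d` make the right-hand side again of the form of the left-hand side, so that
the lemma can be applied repeatedly under the outer sum. -/
lemma sum_Iic_single_add {x : ι} {r : ι →₀ ℕ} (hx : x ∉ r.support) (k a d : ℕ) :
    ∑ u ∈ Iic (single x k + r), φ (#u.support + a) (u.degree + d) =
      ∑ c ∈ range (k + 1), ∑ v ∈ Iic r,
        φ (#v.support + (a + if c = 0 then 0 else 1)) (v.degree + (d + c)) := by
  rw [← sum_product']
  have hrx : r x = 0 := notMem_support_iff.1 hx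
  refine sum_nbij' (fun u => (u x, u.erase x)) (fun p => single x p.1 + p.2) ?_ ?_ ?_ ?_ ?_
  · intro u hu
    simp only [mem_Iic, mem_product, mem_range] at hu ⊢
    refine ⟨by simpa [hrx] using hu x, fun i => ?_⟩
    rcases eq_or_ne i x with rfl | hi
    · simp
    · simpa [erase_ne hi, single_eq_of_ne hi] using hu i
  · rintro ⟨c, v⟩ hp
    simp only [mem_Iic, mem_product, mem_range] at hp ⊢
    exact add_le_add (single_le_single.2 (by omega)) hp.2
  · intro u _
    exact single_add_erase x u
  · rintro ⟨c, v⟩ hp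
    simp only [mem_Iic, mem_product, mem_range] at hp
    have hvx : v x = 0 := Nat.eq_zero_of_le_zero (hrx ▸ hp.2 x)
    simp [hvx]
  · intro u _
    have hx' : x ∉ (u.erase x).support := by simp
    conv_lhs => rw [← single_add_erase x u]
    rw [card_support_single_add hx', map_add, degree_single]
    ac_rfl

lemma sum_Iic_single (x : ι) (k a d : ℕ) :
    ∑ u ∈ Iic (single x k), φ (#u.support + a) (u.degree + d) =
      ∑ c ∈ range (k + 1), φ (a + if c = 0 then 0 else 1) (d + c) := by
  rw [← add_zero (single x k), sum_Iic_single_add φ (by simp)]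
  simp [show Iic (0 : ι →₀ ℕ) = {0} from Iic_bot]

end IicSum

lemma exists_eq_single_add_single_add_single {ι : Type*} [DecidableEq ι] {t : ι →₀ ℕ}
    (ht : t.degree = 3) : ∃ x y z, t = single x 1 + single y 1 + single z 1 := by
  obtain ⟨x, y, z, h⟩ := Multiset.card_eq_three.1 (by rw [card_toMultiset]; exact ht)
  refine ⟨x, y, z, ?_⟩
  rw [← toMultiset_toFinsupp t, h]
  simp [← Multiset.singleton_add, Multiset.toFinsupp_add, add_assoc]

def IsState (b : ℕ) (v : ℕ →₀ ℕ) : Prop := (∀ i, v i ≤ b) ∧ v.degree = b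

def Step (s t : ℕ →₀ ℕ) : Prop := ∀ i, s (i + 1) ≤ t i

def Adj (b : ℕ) (s t : ℕ →₀ ℕ) : Prop := IsState b s ∧ IsState b t ∧ Step s t

noncomputable def tail (s : ℕ →₀ ℕ) : ℕ →₀ ℕ := s.comapDomain Nat.succ Nat.succ_injective.injOn

@[simp] lemma tail_apply (s : ℕ →₀ ℕ) (i : ℕ) : tail s i = s (i + 1) := rfl

/-- Throwing from `prevState b u` can reach exactly the states `t ≥ u`. -/
noncomputable def prevState (b : ℕ) (u : ℕ →₀ ℕ) : ℕ →₀ ℕ :=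
  single 0 (b - u.degree) + u.mapDomain Nat.succ

@[simp] lemma prevState_apply_zero (b : ℕ) (u : ℕ →₀ ℕ) : prevState b u 0 = b - u.degree := by
  simp [prevState, mapDomain_of_notMem_range]

@[simp] lemma prevState_apply_succ (b : ℕ) (u : ℕ →₀ ℕ) (i : ℕ) :
    prevState b u (i + 1) = u i := by
  simp [prevState, mapDomain_apply Nat.succ_injective]

lemma prevState_injective (b : ℕ) : Function.Injective (prevState b) := fun u v h =>
  Finsupp.ext fun i => by simpa using DFunLike.congr_fun h (i + 1)

lemma single_zero_add_mapDomain_tail (s : ℕ →₀ ℕ) :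
    single 0 (s 0) + (tail s).mapDomain Nat.succ = s := by
  ext (_ | i)
  · simp [mapDomain_of_notMem_range]
  · simp [mapDomain_apply Nat.succ_injective]

lemma degree_eq_apply_zero_add_degree_tail (s : ℕ →₀ ℕ) :
    s.degree = s 0 + (tail s).degree := by
  conv_lhs => rw [← single_zero_add_mapDomain_tail s]
  simp

lemma prevState_tail {b : ℕ} {s : ℕ →₀ ℕ} (hs : s.degree = b) : prevState b (tail s) = s := by
  ext (_ | i)
  · rw [prevState_apply_zero, ← hs, degree_eq_apply_zero_add_degree_tail s]
    omega
  · simp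

lemma card_support_prevState (b : ℕ) (u : ℕ →₀ ℕ) :
    #(prevState b u).support = #u.support + if u.degree < b then 1 else 0 := by
  have hshift : #(u.mapDomain Nat.succ).support = #u.support := by
    rw [mapDomain_support_of_injective Nat.succ_injective,
      card_image_of_injective _ Nat.succ_injective]
  by_cases h : u.degree < b
  · rw [prevState, support_single_add (by simp [mapDomain_of_notMem_range]) (by omega), card_cons,
      hshift, if_pos h]
  · rw [prevState, Nat.sub_eq_zero_of_le (not_lt.1 h), single_zero, zero_add, hshift, if_neg h,
      add_zero]

lemma degree_prevState {b : ℕ} {u : ℕ →₀ ℕ} (hu : u.degree ≤ b) : (prevState b u).degree = b := by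
  rw [prevState, map_add, degree_single, degree_mapDomain, Nat.sub_add_cancel hu]

noncomputable def predecessors (b : ℕ) (t : ℕ →₀ ℕ) : Finset (ℕ →₀ ℕ) := (Iic t).image (prevState b)

lemma mem_predecessors {b : ℕ} {s t : ℕ →₀ ℕ} (ht : IsState b t) :
    s ∈ predecessors b t ↔ Adj b s t := by
  simp only [predecessors, mem_image, mem_Iic]
  constructor
  · rintro ⟨u, hut, rfl⟩
    have hu : u.degree ≤ b := ht.2 ▸ degree_mono hut
    refine ⟨⟨fun i => ?_, ?_⟩, ht, fun i => ?_⟩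
    · cases i with
      | zero => simp
      | succ i => simpa using (hut i).trans (ht.1 i)
    · exact degree_prevState hu
    · simpa using hut i
  · rintro ⟨hs, -, hst⟩
    exact ⟨tail s, hst, prevState_tail hs.2⟩

lemma finite_setOf_adj (b : ℕ) (t : ℕ →₀ ℕ) : {s | Adj b s t}.Finite :=
  (predecessors b t).finite_toSet.subset fun _ hs => (mem_predecessors hs.2.1).2 hs

/-- The argument is a support size; `shapeStep g c` sums `g` over the support sizes of the
predecessors of a state whose support has size `c`. -/
def shapeStep (g : ℕ → ℕ) : ℕ → ℕ
  | 1 => 2 * g 1 + 2 * g 2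
  | 2 => g 1 + 4 * g 2 + g 3
  | 3 => g 1 + 3 * g 2 + 4 * g 3
  | _ => 0

section PredecessorSum

variable (g : ℕ → ℕ)

lemma sum_Iic_single_three (x : ℕ) :
    ∑ u ∈ Iic (single x 3), g (#u.support + if u.degree < 3 then 1 else 0) =
      shapeStep g #(single x 3).support := by
  let φ k m := g (k + if m < 3 then 1 else 0)
  change ∑ u ∈ Iic (single x 3), φ (#u.support + 0) (u.degree + 0) = _
  rw [sum_Iic_single φ, support_single _ three_ne_zero, card_singleton]
  simp [sum_range_succ, shapeStep, φ]
  ring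

lemma sum_Iic_single_two_add_single_one {x y : ℕ} (hxy : x ≠ y) :
    ∑ u ∈ Iic (single x 2 + single y 1), g (#u.support + if u.degree < 3 then 1 else 0) =
      shapeStep g #(single x 2 + single y 1).support := by
  let φ k m := g (k + if m < 3 then 1 else 0)
  change ∑ u ∈ Iic (single x 2 + single y 1), φ (#u.support + 0) (u.degree + 0) = _
  have hx : x ∉ (single y 1).support := by simp [hxy]
  rw [sum_Iic_single_add φ hx, card_support_single_add hx, support_single _ one_ne_zero,
    card_singleton]
  simp only [sum_Iic_single φ]
  simp [sum_range_succ, shapeStep, φ]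
  ring

lemma sum_Iic_single_one_add_single_one_add_single_one {x y z : ℕ} (hxy : x ≠ y) (hxz : x ≠ z)
    (hyz : y ≠ z) :
    ∑ u ∈ Iic (single x 1 + (single y 1 + single z 1)),
        g (#u.support + if u.degree < 3 then 1 else 0) =
      shapeStep g #(single x 1 + (single y 1 + single z 1)).support := by
  let φ k m := g (k + if m < 3 then 1 else 0)
  change ∑ u ∈ Iic (single x 1 + (single y 1 + single z 1)), φ (#u.support + 0) (u.degree + 0) = _
  have hy : y ∉ (single z 1).support := by simp [hyz]
  have hx : x ∉ (single y 1 + single z 1).support := by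
    rw [support_single_add hy one_ne_zero]; simp [hxy, hxz]
  rw [sum_Iic_single_add φ hx, card_support_single_add hx, card_support_single_add hy,
    support_single _ one_ne_zero, card_singleton]
  simp only [sum_Iic_single_add φ hy, sum_Iic_single φ]
  simp [sum_range_succ, shapeStep, φ]
  ring

end PredecessorSum

lemma sum_predecessors {t : ℕ →₀ ℕ} (ht : IsState 3 t) (g : ℕ → ℕ) :
    ∑ s ∈ predecessors 3 t, g #s.support = shapeStep g #t.support := by
  rw [predecessors, sum_image fun _ _ _ _ h => prevState_injective 3 h]
  simp only [card_support_prevState]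
  obtain ⟨x, y, z, rfl⟩ := exists_eq_single_add_single_add_single ht.2
  rcases eq_or_ne x y with rfl | hxy
  · rcases eq_or_ne x z with rfl | hxz
    · rw [← single_add, ← single_add]
      exact sum_Iic_single_three g x
    · rw [← single_add]
      exact sum_Iic_single_two_add_single_one g hxz
  · rcases eq_or_ne x z with rfl | hxz
    · rw [add_right_comm, ← single_add]
      exact sum_Iic_single_two_add_single_one g hxy
    · rcases eq_or_ne y z with rfl | hyz
      · rw [add_assoc, ← single_add, add_comm]
        exact sum_Iic_single_two_add_single_one g hxy.symm
      · rw [add_assoc]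
        exact sum_Iic_single_one_add_single_one_add_single_one g hxy hxz hyz

def shapeCount (n : ℕ) : ℕ → ℕ := shapeStep^[n] fun _ => 1

lemma shapeCount_add_three (n : ℕ) :
    shapeCount (n + 3) 1 + 27 * shapeCount (n + 1) 1 =
      10 * shapeCount (n + 2) 1 + 20 * shapeCount n 1 := by
  simp only [shapeCount, Function.iterate_succ_apply', shapeStep]
  ring

lemma isState_single (b i : ℕ) : IsState b (single i b) :=
  ⟨fun j => by rw [single_apply]; split_ifs <;> omega, degree_single i b⟩

lemma ncard_walkSet_succ_eq_shapeCount (n : ℕ) {t : ℕ →₀ ℕ} (ht : IsState 3 t) :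
    (walkSet (Adj 3) (n + 1) (single 0 3) t).ncard = shapeCount n #t.support := by
  induction n generalizing t with
  | zero =>
    rw [ncard_walkSet_succ (finite_setOf_adj 3) 0 _ fun _ => mem_predecessors ht]
    simp_rw [ncard_walkSet_zero]
    have hground : single 0 3 ∈ predecessors 3 t :=
      (mem_predecessors ht).2 ⟨isState_single 3 0, ht, fun i => by simp⟩
    rw [Finset.sum_ite_eq, if_pos hground]
    rfl
  | succ n ih =>
    rw [ncard_walkSet_succ (finite_setOf_adj 3) _ _ fun _ => mem_predecessors ht,
      sum_congr rfl fun s hs => ih ((mem_predecessors ht).1 hs).1, sum_predecessors ht]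
    exact congrFun (Function.iterate_succ_apply' shapeStep n _).symm _

lemma walkSet_adj_eq_setOf {b : ℕ} {u : ℕ →₀ ℕ} (hu : IsState b u) (n : ℕ) (v : ℕ →₀ ℕ) :
    walkSet (Adj b) n u v = {f | f 0 = u ∧ f (Fin.last n) = v ∧ (∀ k, IsState b (f k)) ∧
      ∀ k : Fin n, Step (f k.castSucc) (f k.succ)} := by
  ext f
  refine ⟨fun ⟨h0, hlast, hadj⟩ => ⟨h0, hlast, ?_, fun k => (hadj k).2.2⟩,
    fun ⟨h0, hlast, hs, hstep⟩ => ⟨h0, hlast, fun k => ⟨hs _, hs _, hstep k⟩⟩⟩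
  exact Fin.cases (h0 ▸ hu) fun k => (hadj k).2.1

end Multiplex

open Multiplex in
/-- In the multiplex state diagram with `b = 3` balls and capacity `m = 3`
(states: finitely supported sequences with entries in `{0,1,2,3}` summing to
`3`, indexed from `0`; edge `α → β` iff `α (i+1) ≤ β i` for all `i`), the number
`a n` of closed walks of length `n` based at the state `⟨3⟩` satisfies
`a (k+3) = 10·a (k+2) − 27·a (k+1) + 20·a k` for all `k ≥ 1`, with
`a 1 = 1`, `a 2 = 4`, `a 3 = 20`. -/
theorem multiplex_b3_m3_recurrence
    (a : ℕ → ℕ)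
    (ha : ∀ n, a n = {f : Fin (n + 1) → (ℕ →₀ ℕ) |
        f 0 = Finsupp.single 0 3 ∧ f (Fin.last n) = Finsupp.single 0 3 ∧
        (∀ k, (∀ i, f k i ≤ 3) ∧ (f k).sum (fun _ x => x) = 3) ∧
        (∀ k : Fin n, ∀ i, f k.castSucc (i + 1) ≤ f k.succ i)}.ncard) :
    (∀ k ≥ 1, (a (k + 3) : ℤ) = 10 * a (k + 2) - 27 * a (k + 1) + 20 * a k) ∧
      a 1 = 1 ∧ a 2 = 4 ∧ a 3 = 20 := by
  have key (n : ℕ) : a (n + 1) = shapeCount n 1 := by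
    have h := ncard_walkSet_succ_eq_shapeCount n (isState_single 3 0)
    rw [support_single _ three_ne_zero, card_singleton,
      walkSet_adj_eq_setOf (isState_single 3 0)] at h
    rw [ha]
    exact h
  refine ⟨fun k hk => ?_, key 0, key 1, key 2⟩
  obtain ⟨j, rfl⟩ := Nat.exists_eq_add_of_le' hk
  have := shapeCount_add_three j
  rw [key, key, key, key]
  omega
end
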